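/- Exact set cover reduces in polynomial time to the optimal bipartite subnetwork problem with d = 1: given a ground set U and a family F of k-element subsets, construct the bipartite graph G with L = F, R = U, and edges (S,u) for u ∈ S; then G has a spanning subgraph in which every vertex of R has degree exactly 1 and at least |F| - |U|/k vertices of L are isolated if and only if F contains an exact cover of U. -/
import Mathlib


/-- Reduction from exact set cover to the optimal bipartite subnetwork problem
with `d = 1`: in the bipartite graph with `L = F`, `R = U`, and an edge `(S,u)`
whenever `u ∈ S`, there is a choice of one incident edge for each `u ∈ U`
(a spanning subgraph with every `R`-vertex of degree exactly `1`) leaving at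
least `|F| - |U|/k` vertices of `L` isolated if and only if `F` contains an
exact cover of `U`. -/
theorem exact_cover_reduction {U : Type*} [Fintype U] [DecidableEq U]
    (F : Finset (Finset U)) (k : ℕ) (hk : 1 ≤ k)
    (hsize : ∀ S ∈ F, S.card = k) (hdvd : k ∣ Fintype.card U) :
    (∃ f : U → Finset U, (∀ u, f u ∈ F ∧ u ∈ f u) ∧
        (F.card : ℤ) - Fintype.card U / k ≤
          ((F.filter (fun S => ∀ u, f u ≠ S)).card : ℤ)) ↔
    ∃ F' ⊆ F, ∀ u : U, ∃! S, S ∈ F' ∧ u ∈ S := by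
  classical
  have hdivZ : ((Fintype.card U / k : ℕ) : ℤ) = (Fintype.card U : ℤ) / (k : ℤ) := by
    obtain ⟨m, hm⟩ := hdvd
    rw [hm, Nat.mul_div_cancel_left _ (by omega : 0 < k)]
    push_cast
    rw [Int.mul_ediv_cancel_left _ (by exact_mod_cast (by omega : k ≠ 0))]
  constructor
  · rintro ⟨f, hf, hcard⟩
    set F'' := F.filter (fun S => ∃ u, f u = S) with hF''
    have hsub : F'' ⊆ F := Finset.filter_subset _ _
    have hcompl : F.filter (fun S => ∀ u, f u ≠ S) = F \ F'' := by
      ext S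
      simp only [hF'', Finset.mem_filter, Finset.mem_sdiff, not_exists]
      tauto
    have hle : F''.card ≤ F.card := Finset.card_le_card hsub
    have hsd : (F \ F'').card = F.card - F''.card := Finset.card_sdiff_of_subset hsub
    have hF''le : F''.card ≤ Fintype.card U / k := by
      rw [hcompl, hsd] at hcard
      have : ((F.card - F''.card : ℕ) : ℤ) = (F.card : ℤ) - F''.card := by
        exact_mod_cast Int.ofNat_sub hle
      rw [this, ← hdivZ] at hcard
      have : (F''.card : ℤ) ≤ ((Fintype.card U / k : ℕ) : ℤ) := by linarith
      exact_mod_cast this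
    set g : U → ℕ := fun u => (F''.filter (fun S => u ∈ S)).card with hg
    have hkey : ∑ u, g u = ∑ S ∈ F'', S.card := by
      simp only [hg, Finset.card_filter]
      rw [Finset.sum_comm]
      refine Finset.sum_congr rfl fun S _ => ?_
      rw [Finset.sum_ite_mem, Finset.univ_inter, Finset.sum_const, smul_eq_mul, mul_one]
    have hsum : ∑ S ∈ F'', S.card = k * F''.card := by
      rw [Finset.sum_congr rfl (fun S hS => hsize S (hsub hS))]
      simp [mul_comm]
    have hsumle : ∑ u, g u ≤ Fintype.card U := by
      rw [hkey, hsum]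
      calc k * F''.card ≤ k * (Fintype.card U / k) :=
            Nat.mul_le_mul_left k hF''le
        _ = Fintype.card U := Nat.mul_div_cancel' hdvd
    have hge : ∀ u, 1 ≤ g u := by
      intro u
      apply Finset.card_pos.mpr
      exact ⟨f u, Finset.mem_filter.mpr ⟨Finset.mem_filter.mpr ⟨(hf u).1, ⟨u, rfl⟩⟩, (hf u).2⟩⟩
    have hone : ∀ u, g u = 1 := by
      by_contra h
      push_neg at h
      obtain ⟨u0, hu0⟩ := h
      have h2 : 1 < g u0 := lt_of_le_of_ne (hge u0) (Ne.symm hu0)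
      have : ∑ _u : U, 1 < ∑ u, g u :=
        Finset.sum_lt_sum (fun i _ => hge i) ⟨u0, Finset.mem_univ _, h2⟩
      simp only [Finset.sum_const, Finset.card_univ, smul_eq_mul, mul_one] at this
      omega
    refine ⟨F'', hsub, fun u => ?_⟩
    obtain ⟨S, hS⟩ := Finset.card_eq_one.mp (hone u)
    have hmem : S ∈ F''.filter (fun T => u ∈ T) := by rw [hS]; exact Finset.mem_singleton_self S
    rw [Finset.mem_filter] at hmem
    refine ⟨S, hmem, fun T hT => ?_⟩
    have : T ∈ F''.filter (fun T => u ∈ T) := Finset.mem_filter.mpr hT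
    rw [hS, Finset.mem_singleton] at this
    exact this
  · rintro ⟨F', hF'sub, hcov⟩
    choose f hf using fun u => (hcov u).exists
    set g : U → ℕ := fun u => (F'.filter (fun S => u ∈ S)).card with hg
    have hone : ∀ u, g u = 1 := by
      intro u
      have : F'.filter (fun S => u ∈ S) = {f u} := by
        ext S
        simp only [Finset.mem_filter, Finset.mem_singleton]
        constructor
        · intro hS
          exact (hcov u).unique hS (hf u)
        · rintro rfl; exact hf u
      show (F'.filter (fun S => u ∈ S)).card = 1
      rw [this, Finset.card_singleton]
    have hkey : ∑ u, g u = ∑ S ∈ F', S.card := by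
      simp only [hg, Finset.card_filter]
      rw [Finset.sum_comm]
      refine Finset.sum_congr rfl fun S _ => ?_
      rw [Finset.sum_ite_mem, Finset.univ_inter, Finset.sum_const, smul_eq_mul, mul_one]
    have hsum : ∑ S ∈ F', S.card = k * F'.card := by
      rw [Finset.sum_congr rfl (fun S hS => hsize S (hF'sub hS))]
      simp [mul_comm]
    have hcardU : k * F'.card = Fintype.card U := by
      rw [← hsum, ← hkey]
      simp [hone, Finset.card_univ]
    have hF'card : F'.card = Fintype.card U / k := by
      rw [← hcardU, Nat.mul_div_cancel_left _ (by omega : 0 < k)]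
    refine ⟨f, fun u => ⟨hF'sub (hf u).1, (hf u).2⟩, ?_⟩
    have hsubset : F \ F' ⊆ F.filter (fun S => ∀ u, f u ≠ S) := by
      intro S hS
      rw [Finset.mem_sdiff] at hS
      refine Finset.mem_filter.mpr ⟨hS.1, fun u hu => ?_⟩
      exact hS.2 (hu ▸ (hf u).1)
    have hle : F'.card ≤ F.card := Finset.card_le_card hF'sub
    have h1 : (F \ F').card ≤ (F.filter (fun S => ∀ u, f u ≠ S)).card :=
      Finset.card_le_card hsubset
    have h2 : (F \ F').card = F.card - F'.card := Finset.card_sdiff_of_subset hF'sub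
    rw [← hdivZ, ← hF'card]
    have : ((F.card - F'.card : ℕ) : ℤ) = (F.card : ℤ) - F'.card := by
      exact_mod_cast Int.ofNat_sub hle
    omega
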